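/- arXiv:1306.1378 — 5 statements merged into one kernel-verified Lean document; each statement's English description precedes it below -/
import Mathlib

section
/- Let (X_n)_{n in Z} be a stationary process with E|log X_0^{(j)}| < infinity for each coordinate j = 1,...,d, where X_n takes values in the positive orthant of R^d. Define Y_omega = max over portfolio functions b of E[log <b(X_{-omega}^{-1}), X_0> | X_{-omega}^{-1}], the conditional expected log-return of the log-optimal portfolio given the last omega observations. Then (Y_omega)_{omega >= 1} is a submartingale with respect to the filtration F_omega = sigma(X_{-omega}^{-1}); i.e., E[Y_{omega+1} | F_omega] >= Y_omega almost surely. -/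
open MeasureTheory Filter

/-! The optimal portfolio `b_ω` for the last `ω` observations is also an admissible (if
suboptimal) portfolio for the last `ω + 1` observations, since it simply ignores the oldest one.
Hence `E[log ⟨b_ω, X_0⟩ | F_{ω+1}] ≤ Y_{ω+1}`, and conditioning on `F_ω ⊆ F_{ω+1}` with the
tower property gives `Y_ω ≤ E[Y_{ω+1} | F_ω]`. -/

theorem condExp_le_condExp_condExp_of_condExp_le {α : Type*} {m₁ m₂ m₀ : MeasurableSpace α}
    {μ : Measure α} {f g : α → ℝ} (hm₁₂ : m₁ ≤ m₂) (hm₂ : m₂ ≤ m₀) [SigmaFinite (μ.trim hm₂)]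
    (hfg : μ[f | m₂] ≤ᵐ[μ] μ[g | m₂]) : μ[f | m₁] ≤ᵐ[μ] μ[μ[g | m₂] | m₁] :=
  (condExp_condExp_of_le hm₁₂ hm₂).symm.trans_le
    (condExp_mono integrable_condExp integrable_condExp hfg)

theorem stmt5_general {Ω : Type*} [m0 : MeasurableSpace Ω] (P : Measure Ω) [IsProbabilityMeasure P]
    (d : ℕ) (X : ℤ → Ω → (Fin d → ℝ))
    (hXmeas : ∀ i, Measurable (X i))
    -- the history of the last `w` observations `X_{-w}^{-1}` and the filtration it generates
    (hist : (w : ℕ) → Ω → (Fin w → Fin d → ℝ))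
    (hhist : ∀ w ω k, hist w ω k = X (-(k : ℤ) - 1) ω)
    (F : ℕ → MeasurableSpace Ω)
    (hF : ∀ w, F w = MeasurableSpace.comap (hist w) inferInstance)
    -- `b w` is a log-optimal portfolio as a function of the last `w` observations
    (b : (w : ℕ) → (Fin w → Fin d → ℝ) → (Fin d → ℝ))
    (hbmeas : ∀ w, Measurable (b w))
    (hbsimplex : ∀ w h, b w h ∈ stdSimplex ℝ (Fin d))
    (hopt : ∀ w, ∀ c : (Fin w → Fin d → ℝ) → (Fin d → ℝ), Measurable c →
      (∀ h, c h ∈ stdSimplex ℝ (Fin d)) →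
      P[fun ω => Real.log (∑ j, c (hist w ω) j * X 0 ω j) | F w]
        ≤ᵐ[P] P[fun ω => Real.log (∑ j, b w (hist w ω) j * X 0 ω j) | F w])
    -- `Y w` is the optimal conditional expected log-return
    (Y : ℕ → Ω → ℝ)
    (hY : ∀ w, Y w = P[fun ω => Real.log (∑ j, b w (hist w ω) j * X 0 ω j) | F w]) :
    ∀ w, Y w ≤ᵐ[P] P[Y (w + 1) | F w] := by
  intro w
  have hhist_init : hist w = fun ω => Fin.init (hist (w + 1) ω) :=
    funext fun ω => funext fun k => by simp only [Fin.init, hhist, Fin.val_castSucc]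
  have hinit_meas : Measurable (Fin.init : (Fin (w + 1) → Fin d → ℝ) → Fin w → Fin d → ℝ) :=
    measurable_pi_lambda _ fun _ => measurable_pi_apply _
  have hhist_meas : Measurable (hist (w + 1)) :=
    measurable_pi_lambda _ fun _ => by simpa only [hhist] using hXmeas _
  have hF_mono : F w ≤ F (w + 1) := by
    rw [hF, hF]
    exact MeasurableSpace.comap_le_comap_of_eq_comp _ hinit_meas hhist_init
  have hF_le : F (w + 1) ≤ m0 := by
    rw [hF]
    exact hhist_meas.comap_le
  have hb_succ := hopt (w + 1) (b w ∘ Fin.init) ((hbmeas w).comp hinit_meas)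
    fun _ => hbsimplex w _
  simp only [Function.comp_apply, ← congrFun hhist_init] at hb_succ
  rw [hY, hY]
  exact condExp_le_condExp_condExp_of_condExp_le hF_mono hF_le hb_succ

/-- Submartingale property of the optimal conditional expected log-returns
`Y_ω = max_{b} E[log ⟨b(X_{-ω}^{-1}), X_0⟩ | X_{-ω}^{-1}]` for a stationary process
`(X_n)_{n ∈ ℤ}` with values in the positive orthant of `ℝ^d` and
`E|log X_0^{(j)}| < ∞`:  `E[Y_{ω+1} | F_ω] ≥ Y_ω` a.s., where
`F_ω = σ(X_{-ω}, …, X_{-1})`.  The maximum is encoded by a family `b` of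
`F_ω`-measurable log-optimal portfolio-valued functions of the last `ω` observations. -/
theorem stmt5 {Ω : Type*} [m0 : MeasurableSpace Ω] (P : Measure Ω) [IsProbabilityMeasure P]
    (d : ℕ) (X : ℤ → Ω → (Fin d → ℝ))
    (hXmeas : ∀ i, Measurable (X i))
    (hXpos : ∀ i ω j, 0 < X i ω j)
    (hstat : ∀ m : ℤ, Measure.map (fun ω => fun i : ℤ => X (i + m) ω) P
      = Measure.map (fun ω => fun i : ℤ => X i ω) P)
    (hint : ∀ j, Integrable (fun ω => |Real.log (X 0 ω j)|) P)
    -- the history of the last `w` observations `X_{-w}^{-1}` and the filtration it generates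
    (hist : (w : ℕ) → Ω → (Fin w → Fin d → ℝ))
    (hhist : ∀ w ω k, hist w ω k = X (-(k : ℤ) - 1) ω)
    (F : ℕ → MeasurableSpace Ω)
    (hF : ∀ w, F w = MeasurableSpace.comap (hist w) inferInstance)
    -- `b w` is a log-optimal portfolio as a function of the last `w` observations
    (b : (w : ℕ) → (Fin w → Fin d → ℝ) → (Fin d → ℝ))
    (hbmeas : ∀ w, Measurable (b w))
    (hbsimplex : ∀ w h, b w h ∈ stdSimplex ℝ (Fin d))
    (hopt : ∀ w, ∀ c : (Fin w → Fin d → ℝ) → (Fin d → ℝ), Measurable c →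
      (∀ h, c h ∈ stdSimplex ℝ (Fin d)) →
      P[fun ω => Real.log (∑ j, c (hist w ω) j * X 0 ω j) | F w]
        ≤ᵐ[P] P[fun ω => Real.log (∑ j, b w (hist w ω) j * X 0 ω j) | F w])
    -- `Y w` is the optimal conditional expected log-return
    (Y : ℕ → Ω → ℝ)
    (hY : ∀ w, Y w = P[fun ω => Real.log (∑ j, b w (hist w ω) j * X 0 ω j) | F w]) :
    ∀ w, Y w ≤ᵐ[P] P[Y (w + 1) | F w] :=
  stmt5_general (m0 := m0) P d X hXmeas hist hhist F hF b hbmeas hbsimplex hopt Y hY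
end

section
/- Let X be an R^d-valued random vector with positive coordinates such that E|log X^{(j)}| < infinity for every j. If (F_k) is an increasing sequence of sub-sigma-fields with F_k increasing to F_infinity, then E[ max_b E[log <b, X> | F_k] ] increases to E[ max_b E[log <b, X> | F_infinity] ] as k -> infinity, where the maximum on each side is over F_k-measurable (respectively F_infinity-measurable) functions b taking values in the simplex Delta_d. -/
/-!
Conditioning on more information can only help the optimal investor, so the sequence
`E[log ⟨b_k, X⟩]` is increasing and bounded by `E[log ⟨b_∞, X⟩]`. For the converse, the
conditional expectations `E[b_∞ | F_k]` are (after modification on a null set) `F_k`-measurable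
portfolios, hence do no better than `b_k`; by Lévy's upward theorem they converge a.s. to `b_∞`,
and since `|log ⟨b, X⟩| ≤ ∑ⱼ |log X⁽ʲ⁾|` for every portfolio `b`, dominated convergence gives
`E[log ⟨E[b_∞ | F_k], X⟩] → E[log ⟨b_∞, X⟩]`.
-/

open MeasureTheory Filter Topology Real Set

section StdSimplex

variable {ι : Type*} [Fintype ι] {v x : ι → ℝ}

lemma sum_mul_mem_Icc_exp_of_mem_stdSimplex (hv : v ∈ stdSimplex ℝ ι) (hx : ∀ j, 0 < x j) :
    ∑ j, v j * x j ∈ Icc (exp (-∑ j, |log (x j)|)) (exp (∑ j, |log (x j)|)) := by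
  have hxIcc : ∀ j, x j ∈ Icc (exp (-∑ j, |log (x j)|)) (exp (∑ j, |log (x j)|)) := by
    intro j
    have hj : |log (x j)| ≤ ∑ i, |log (x i)| :=
      Finset.single_le_sum (fun i _ => abs_nonneg (log (x i))) (Finset.mem_univ j)
    rw [← exp_log (hx j)]
    exact ⟨exp_le_exp.2 (abs_le.1 hj).1, exp_le_exp.2 (abs_le.1 hj).2⟩
  simpa only [smul_eq_mul] using
    (convex_Icc _ _).sum_mem (fun j _ => hv.1 j) hv.2 (fun j _ => hxIcc j)

lemma abs_log_sum_mul_le_of_mem_stdSimplex (hv : v ∈ stdSimplex ℝ ι) (hx : ∀ j, 0 < x j) :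
    |log (∑ j, v j * x j)| ≤ ∑ j, |log (x j)| := by
  obtain ⟨hlo, hhi⟩ := sum_mul_mem_Icc_exp_of_mem_stdSimplex hv hx
  have hpos : 0 < ∑ j, v j * x j := (exp_pos _).trans_le hlo
  exact abs_le.2 ⟨(le_log_iff_exp_le hpos).2 hlo, (log_le_iff_le_exp hpos).2 hhi⟩

end StdSimplex

section LogReturn

variable {Ω ι : Type*} [m0 : MeasurableSpace Ω] [Fintype ι] {X : Ω → ι → ℝ}

noncomputable def logReturn (X c : Ω → ι → ℝ) (ω : Ω) : ℝ := log (∑ j, c ω j * X ω j)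

lemma measurable_logReturn {c : Ω → ι → ℝ} (hX : Measurable X) (hc : Measurable c) :
    Measurable (logReturn X c) := by
  unfold logReturn
  fun_prop

lemma tendsto_integral_logReturn {μ : Measure Ω} (hX : Measurable X) (hXpos : ∀ ω j, 0 < X ω j)
    (hint : ∀ j, Integrable (fun ω => |log (X ω j)|) μ) {c : ℕ → Ω → ι → ℝ}
    {c₀ : Ω → ι → ℝ} (hc : ∀ n, Measurable (c n)) (hcS : ∀ n ω, c n ω ∈ stdSimplex ℝ ι)
    (hc₀S : ∀ ω, c₀ ω ∈ stdSimplex ℝ ι)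
    (hlim : ∀ᵐ ω ∂μ, Tendsto (fun n => c n ω) atTop (𝓝 (c₀ ω))) :
    Tendsto (fun n => ∫ ω, logReturn X (c n) ω ∂μ) atTop (𝓝 (∫ ω, logReturn X c₀ ω ∂μ)) := by
  refine tendsto_integral_of_dominated_convergence (fun ω => ∑ j, |log (X ω j)|)
    (fun n => (measurable_logReturn hX (hc n)).aestronglyMeasurable)
    (integrable_finsetSum _ fun j _ => hint j)
    (fun n => ae_of_all _ fun ω => abs_log_sum_mul_le_of_mem_stdSimplex (hcS n ω) (hXpos ω))
    (hlim.mono fun ω hω => ?_)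
  have hpos : 0 < ∑ j, c₀ ω j * X ω j :=
    (exp_pos _).trans_le (sum_mul_mem_Icc_exp_of_mem_stdSimplex (hc₀S ω) (hXpos ω)).1
  have hcont : ContinuousAt (fun v : ι → ℝ => log (∑ j, v j * X ω j)) (c₀ ω) :=
    ContinuousAt.log
      (continuous_finsetSum _ fun j _ => (continuous_apply j).mul continuous_const).continuousAt
      hpos.ne'
  exact hcont.tendsto.comp hω

end LogReturn

section CondExp

variable {Ω ι : Type*} [Fintype ι] {m m0 : MeasurableSpace Ω} {μ : Measure[m0] Ω}

lemma integral_le_integral_of_condExp_le (hm : m ≤ m0) [SigmaFinite (μ.trim hm)]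
    {f g : Ω → ℝ} (h : μ[f | m] ≤ᵐ[μ] μ[g | m]) : ∫ ω, f ω ∂μ ≤ ∫ ω, g ω ∂μ := by
  rw [← integral_condExp hm (f := f), ← integral_condExp hm (f := g)]
  exact integral_mono_ae integrable_condExp integrable_condExp h

lemma exists_measurable_forall_mem_ae_eq {β : Type*} [MeasurableSpace β] [NeZero μ]
    {s : Set β} (hs : MeasurableSet s) {f : Ω → β} (hf : Measurable[m] f)
    (hfs : ∀ᵐ ω ∂μ, f ω ∈ s) : ∃ g, Measurable[m] g ∧ (∀ ω, g ω ∈ s) ∧ g =ᵐ[μ] f := by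
  classical
  obtain ⟨ω₀, hω₀⟩ := hfs.exists
  refine ⟨fun ω => if f ω ∈ s then f ω else f ω₀, Measurable.ite (hf hs) hf measurable_const,
    fun ω => ?_, hfs.mono fun ω hω => if_pos hω⟩
  by_cases hω : f ω ∈ s <;> simp only [hω, hω₀, if_true, if_false]

lemma integrable_apply_of_mem_stdSimplex [IsFiniteMeasure μ] {g : Ω → ι → ℝ} (hg : Measurable g)
    (hgS : ∀ ω, g ω ∈ stdSimplex ℝ ι) (j : ι) : Integrable (fun ω => g ω j) μ := by
  refine (integrable_const (1 : ℝ)).mono' ((measurable_pi_apply j).comp hg).aestronglyMeasurable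
    (ae_of_all _ fun ω => ?_)
  obtain ⟨h0, h1⟩ := mem_Icc_of_mem_stdSimplex (hgS ω) j
  rwa [Real.norm_eq_abs, abs_of_nonneg h0]

lemma condExp_mem_stdSimplex [IsFiniteMeasure μ] (hm : m ≤ m0) {g : Ω → ι → ℝ}
    (hg : Measurable g) (hgS : ∀ ω, g ω ∈ stdSimplex ℝ ι) :
    ∀ᵐ ω ∂μ, (fun j => μ[fun ω' => g ω' j | m] ω) ∈ stdSimplex ℝ ι := by
  have hint := integrable_apply_of_mem_stdSimplex (μ := μ) hg hgS
  have hnonneg : ∀ᵐ ω ∂μ, ∀ j, 0 ≤ μ[fun ω' => g ω' j | m] ω :=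
    ae_all_iff.2 fun j => condExp_nonneg (ae_of_all _ fun ω => (hgS ω).1 j)
  have hsum : μ[∑ j, fun ω' => g ω' j | m] =ᵐ[μ] ∑ j, μ[fun ω' => g ω' j | m] :=
    condExp_finsetSum (fun j _ => hint j) m
  have hone : (∑ j, fun ω' => g ω' j) = fun _ => (1 : ℝ) := by
    funext ω
    simpa only [Finset.sum_apply] using (hgS ω).2
  rw [hone, condExp_const hm] at hsum
  filter_upwards [hnonneg, hsum] with ω hω hω'
  exact ⟨hω, by simpa only [Finset.sum_apply] using hω'.symm⟩

lemma tendsto_ae_condExp_pi [IsFiniteMeasure μ] {ℱ : Filtration ℕ m0} {g : Ω → ι → ℝ}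
    (hg : ∀ j, Integrable (fun ω => g ω j) μ) (hgm : Measurable[⨆ n, ℱ n] g) :
    ∀ᵐ ω ∂μ, Tendsto (fun n j => μ[fun ω' => g ω' j | ℱ n] ω) atTop (𝓝 (g ω)) := by
  simp_rw [tendsto_pi_nhds]
  exact ae_all_iff.2 fun j =>
    (hg j).tendsto_ae_condExp ((measurable_pi_apply j).comp hgm).stronglyMeasurable

lemma exists_tendsto_ae_of_mem_stdSimplex [IsFiniteMeasure μ] [NeZero μ] (ℱ : Filtration ℕ m0)
    {g : Ω → ι → ℝ} (hgm : Measurable[⨆ n, ℱ n] g) (hgS : ∀ ω, g ω ∈ stdSimplex ℝ ι) :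
    ∃ c : ℕ → Ω → ι → ℝ, (∀ n, Measurable[ℱ n] (c n)) ∧ (∀ n ω, c n ω ∈ stdSimplex ℝ ι) ∧
      ∀ᵐ ω ∂μ, Tendsto (fun n => c n ω) atTop (𝓝 (g ω)) := by
  have hg : Measurable g := hgm.mono (iSup_le ℱ.le) le_rfl
  have hmeas : ∀ n, Measurable[ℱ n] fun ω j => μ[fun ω' => g ω' j | ℱ n] ω := fun n =>
    @measurable_pi_lambda Ω ι (fun _ => ℝ) (ℱ n) _ _ fun j => stronglyMeasurable_condExp.measurable
  choose c hcm hcS hceq using fun n => exists_measurable_forall_mem_ae_eq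
    (isClosed_stdSimplex ℝ ι).measurableSet (hmeas n) (condExp_mem_stdSimplex (ℱ.le n) hg hgS)
  refine ⟨c, hcm, hcS, ?_⟩
  filter_upwards [ae_all_iff.2 hceq,
    tendsto_ae_condExp_pi (integrable_apply_of_mem_stdSimplex hg hgS) hgm] with ω hω hlim
  simpa only [hω] using hlim

end CondExp

/-- Algoet–Cover's lemma: for an `ℝ^d`-valued random vector `X` with positive
coordinates and `E|log X^{(j)}| < ∞`, and an increasing sequence of sub-σ-fields
`F_k ↗ F_∞`, the optimal expected conditional log-returns
`E[max_b E[log ⟨b, X⟩ | F_k]]` increase to `E[max_b E[log ⟨b, X⟩ | F_∞]]`.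
The maxima are encoded by families `b k` (resp. `b∞`) of `F_k`- (resp. `F_∞`-)measurable
simplex-valued functions that are conditionally log-optimal among such functions. -/
theorem stmt7 {Ω : Type*} [m0 : MeasurableSpace Ω] (P : Measure Ω) [IsProbabilityMeasure P]
    (d : ℕ) (X : Ω → (Fin d → ℝ)) (hXmeas : Measurable X)
    (hXpos : ∀ ω j, 0 < X ω j)
    (hint : ∀ j, Integrable (fun ω => |Real.log (X ω j)|) P)
    (F : ℕ → MeasurableSpace Ω) (Finf : MeasurableSpace Ω)
    (hFle : ∀ k, F k ≤ m0) (hFmono : Monotone F)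
    (hFinf : Finf = ⨆ k, F k)
    (b : ℕ → Ω → (Fin d → ℝ)) (binf : Ω → (Fin d → ℝ))
    (hbmeas : ∀ k, Measurable[F k] (b k)) (hbinfmeas : Measurable[Finf] binf)
    (hbsimplex : ∀ k ω, b k ω ∈ stdSimplex ℝ (Fin d))
    (hbinfsimplex : ∀ ω, binf ω ∈ stdSimplex ℝ (Fin d))
    (hopt : ∀ k, ∀ c : Ω → (Fin d → ℝ), Measurable[F k] c →
      (∀ ω, c ω ∈ stdSimplex ℝ (Fin d)) →
      P[fun ω => Real.log (∑ j, c ω j * X ω j) | F k]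
        ≤ᵐ[P] P[fun ω => Real.log (∑ j, b k ω j * X ω j) | F k])
    (hoptinf : ∀ c : Ω → (Fin d → ℝ), Measurable[Finf] c →
      (∀ ω, c ω ∈ stdSimplex ℝ (Fin d)) →
      P[fun ω => Real.log (∑ j, c ω j * X ω j) | Finf]
        ≤ᵐ[P] P[fun ω => Real.log (∑ j, binf ω j * X ω j) | Finf]) :
    Monotone (fun k => ∫ ω, (P[fun ω' => Real.log (∑ j, b k ω' j * X ω' j) | F k]) ω ∂P)
      ∧ Tendsto (fun k => ∫ ω, (P[fun ω' => Real.log (∑ j, b k ω' j * X ω' j) | F k]) ω ∂P)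
          atTop
          (nhds (∫ ω, (P[fun ω' => Real.log (∑ j, binf ω' j * X ω' j) | Finf]) ω ∂P)) := by
  have hFinf_le : Finf ≤ m0 := hFinf ▸ iSup_le hFle
  have hF_le_Finf : ∀ k, F k ≤ Finf := fun k => hFinf ▸ le_iSup F k
  simp only [integral_condExp (hFle _), integral_condExp hFinf_le]
  have hle_inf : ∀ k, ∫ ω, logReturn X (b k) ω ∂P ≤ ∫ ω, logReturn X binf ω ∂P := fun k =>
    integral_le_integral_of_condExp_le hFinf_le
      (hoptinf (b k) ((hbmeas k).mono (hF_le_Finf k) le_rfl) (hbsimplex k))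
  let ℱ : Filtration ℕ m0 := ⟨F, hFmono, hFle⟩
  obtain ⟨c, hcm, hcS, hlim⟩ :=
    exists_tendsto_ae_of_mem_stdSimplex (μ := P) ℱ (hFinf ▸ hbinfmeas) hbinfsimplex
  refine ⟨fun k l hkl => integral_le_integral_of_condExp_le (hFle l)
    (hopt l (b k) ((hbmeas k).mono (hFmono hkl) le_rfl) (hbsimplex k)), ?_⟩
  -- `Finf` is a local `MeasurableSpace Ω` too, so the ambient σ-algebra `m0` must be named.
  refine tendsto_of_tendsto_of_tendsto_of_le_of_le
    (tendsto_integral_logReturn (m0 := m0) hXmeas hXpos hint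
      (fun k => (hcm k).mono (hFle k) le_rfl) hcS hbinfsimplex hlim)
    tendsto_const_nhds (fun k => ?_) hle_inf
  exact integral_le_integral_of_condExp_le (hFle k) (hopt k (c k) (hcm k) (hcS k))
end

section
/- Let (X_n)_{n in Z} be a stationary ergodic process taking values in the positive orthant of R^d, and fix s in R^{d*omega} and a threshold c > 0 with P(||X_{-omega}^{-1} - s||^2 <= c) > 0. For each j, let P_{j,s} be the empirical measure on R^d_+ putting equal mass on those X_i with 1-j+omega <= i <= 0 for which ||X_{i-omega}^{i-1} - s||^2 <= c. Then for every bounded continuous function f on R^d_+, the integral of f with respect to P_{j,s} converges almost surely, as j -> infinity, to E[f(X_0) | ||X_{-omega}^{-1} - s||^2 <= c]; i.e., P_{j,s} converges weakly to the conditional law of X_0 given the event {||X_{-omega}^{-1} - s||^2 <= c}, almost surely. -/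
/-!
Both the numerator and the denominator of the empirical ratio are Birkhoff sums, along the
shift `T`, of the bounded functions `1_A · f(X_0)` and `1_A`, where
`A = {‖X_{-ω}^{-1} - s‖² ≤ c}`. So the ratio converges almost surely to `∫_A f(X_0) dP / P(A)`
by the pointwise ergodic theorem, proved here for bounded functions. By Garsia's inequality
`M_N - M_N ∘ T ≤ 1_{M_N > 0} g` for the running maxima `M_N` of the Birkhoff sums, `g` has
nonnegative integral over the set where some Birkhoff sum is positive. The limsup of the
Birkhoff averages is `T`-invariant, hence a.e. equal to a constant; if that constant exceeded
some `β > ∫ g`, almost every orbit would have a positive Birkhoff sum of `g - β`, forcing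
`∫ g ≥ β`.
-/

open MeasureTheory Filter Finset Topology

lemma Filter.limsup_eq_limsup_of_tendsto_sub_nhds_zero {u v : ℕ → ℝ}
    (huv : Tendsto (u - v) atTop (𝓝 0))
    (hv : IsBoundedUnder (· ≤ ·) atTop v) (hv' : IsBoundedUnder (· ≥ ·) atTop v) :
    limsup u atTop = limsup v atTop := by
  have hu : u = v + (u - v) := by abel
  rw [hu]
  refine le_antisymm ?_ ?_
  · refine (limsup_add_le hv' hv huv.isBoundedUnder_ge.isCoboundedUnder_le
      huv.isBoundedUnder_le).trans_eq ?_
    rw [huv.limsup_eq, add_zero]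
  · refine le_trans (le_of_eq ?_) (le_limsup_add hv hv'.isCoboundedUnder_le
      huv.isBoundedUnder_le huv.isBoundedUnder_ge)
    rw [huv.liminf_eq, add_zero]

section BirkhoffSum

variable {α : Type*} {f : α → α}

lemma birkhoffSum_indicator_setOf {M : Type*} [AddCommMonoid M] (p : α → Prop)
    [DecidablePred p] (g : α → M) (n : ℕ) (x : α) :
    birkhoffSum f ({y | p y}.indicator g) n x = ∑ k ∈ (range n).filter (fun k => p (f^[k] x)),
      g (f^[k] x) := by
  simp [birkhoffSum, sum_filter, Set.indicator_apply]

variable {g : α → ℝ}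

lemma abs_birkhoffAverage_le {C : ℝ} (hC₀ : 0 ≤ C)
    (hC : ∀ x, |g x| ≤ C) (n : ℕ) (x : α) : |birkhoffAverage ℝ f g n x| ≤ C := by
  rcases Nat.eq_zero_or_pos n with rfl | hn
  · simpa using hC₀
  have hsum : |birkhoffSum f g n x| ≤ n * C := by
    calc |birkhoffSum f g n x| ≤ ∑ k ∈ range n, |g (f^[k] x)| := abs_sum_le_sum_abs _ _
      _ ≤ ∑ _k ∈ range n, C := sum_le_sum fun k _ => hC _
      _ = n * C := by simp
  rwa [birkhoffAverage, smul_eq_mul, abs_mul, abs_inv, Nat.abs_cast,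
    inv_mul_le_iff₀ (by positivity)]

lemma isBoundedUnder_le_birkhoffAverage (hg : Bornology.IsBounded (Set.range g)) (x : α) :
    IsBoundedUnder (· ≤ ·) atTop (birkhoffAverage ℝ f g · x) :=
  let ⟨C, hC₀, hC⟩ := hg.exists_pos_norm_le
  isBoundedUnder_of ⟨C, fun n =>
    (abs_le.1 (abs_birkhoffAverage_le hC₀.le (fun y => hC _ ⟨y, rfl⟩) n x)).2⟩

lemma isBoundedUnder_ge_birkhoffAverage (hg : Bornology.IsBounded (Set.range g)) (x : α) :
    IsBoundedUnder (· ≥ ·) atTop (birkhoffAverage ℝ f g · x) :=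
  let ⟨C, hC₀, hC⟩ := hg.exists_pos_norm_le
  isBoundedUnder_of ⟨-C, fun n =>
    (abs_le.1 (abs_birkhoffAverage_le hC₀.le (fun y => hC _ ⟨y, rfl⟩) n x)).1⟩

lemma limsup_birkhoffAverage_apply (hg : Bornology.IsBounded (Set.range g)) (x : α) :
    limsup (birkhoffAverage ℝ f g · (f x)) atTop = limsup (birkhoffAverage ℝ f g · x) atTop :=
  limsup_eq_limsup_of_tendsto_sub_nhds_zero
    (tendsto_birkhoffAverage_apply_sub_birkhoffAverage' ℝ hg f x)
    (isBoundedUnder_le_birkhoffAverage hg x) (isBoundedUnder_ge_birkhoffAverage hg x)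

lemma birkhoffSum_sub_const_pos {β : ℝ} {n : ℕ} {x : α} (hn : 0 < n)
    (hβ : β < birkhoffAverage ℝ f g n x) : 0 < birkhoffSum f (fun y => g y - β) n x := by
  rw [birkhoffAverage, smul_eq_mul, lt_inv_mul_iff₀ (by exact_mod_cast hn)] at hβ
  simpa [birkhoffSum] using hβ

-- `max_{k ≤ N} S_k` includes the empty sum `S_0 = 0`, so it is nonnegative, as Garsia's
-- inequality `birkhoffMax_sub_birkhoffMax_apply_le` needs.
noncomputable def birkhoffMax (f : α → α) (g : α → ℝ) (N : ℕ) : α → ℝ :=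
  (range (N + 1)).sup' nonempty_range_add_one (birkhoffSum f g)

lemma birkhoffMax_apply (N : ℕ) (x : α) :
    birkhoffMax f g N x = (range (N + 1)).sup' nonempty_range_add_one (birkhoffSum f g · x) :=
  Finset.sup'_apply _ _ _

lemma birkhoffSum_le_birkhoffMax {k N : ℕ} (hk : k ≤ N) (x : α) :
    birkhoffSum f g k x ≤ birkhoffMax f g N x := by
  rw [birkhoffMax_apply]
  exact le_sup' (birkhoffSum f g · x) (mem_range_succ_iff.2 hk)

lemma birkhoffMax_nonneg (N : ℕ) (x : α) : 0 ≤ birkhoffMax f g N x := by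
  simpa using birkhoffSum_le_birkhoffMax (f := f) (g := g) N.zero_le x

lemma birkhoffMax_pos_iff {N : ℕ} {x : α} :
    0 < birkhoffMax f g N x ↔ ∃ k ≤ N, 0 < birkhoffSum f g k x := by
  simp [birkhoffMax_apply, lt_sup'_iff]

lemma birkhoffMax_mono : Monotone (birkhoffMax f g) :=
  monotone_nat_of_le_succ fun N =>
    sup'_mono (f := birkhoffSum f g) (range_subset_range.2 (N + 1).le_succ) nonempty_range_add_one

lemma birkhoffMax_le_add_birkhoffMax_apply {N : ℕ} {x : α} (h : 0 < birkhoffMax f g N x) :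
    birkhoffMax f g N x ≤ g x + birkhoffMax f g N (f x) := by
  obtain ⟨k, hk, hmax⟩ := exists_mem_eq_sup' nonempty_range_add_one (birkhoffSum f g · x)
  rw [birkhoffMax_apply, hmax] at h ⊢
  obtain ⟨j, rfl⟩ : ∃ j, k = j + 1 :=
    Nat.exists_eq_add_one.2 (Nat.pos_of_ne_zero (by rintro rfl; simp at h))
  rw [birkhoffSum_succ']
  gcongr
  exact birkhoffSum_le_birkhoffMax (by simp at hk; omega) _

lemma birkhoffMax_sub_birkhoffMax_apply_le (N : ℕ) (x : α) :
    birkhoffMax f g N x - birkhoffMax f g N (f x) ≤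
      {y | 0 < birkhoffMax f g N y}.indicator g x := by
  by_cases h : 0 < birkhoffMax f g N x
  · rw [Set.indicator_of_mem (show x ∈ {y | 0 < birkhoffMax f g N y} from h)]
    linarith [birkhoffMax_le_add_birkhoffMax_apply h]
  · rw [Set.indicator_of_notMem (show x ∉ {y | 0 < birkhoffMax f g N y} from h)]
    linarith [birkhoffMax_nonneg (f := f) (g := g) N (f x)]

end BirkhoffSum

section MaximalErgodic

variable {α : Type*} [MeasurableSpace α] {μ : Measure α} {f : α → α} {g : α → ℝ}

lemma Measurable.birkhoffSum (hf : Measurable f) (hg : Measurable g) (n : ℕ) :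
    Measurable (birkhoffSum f g n) :=
  measurable_sum _ fun i _ => hg.comp (hf.iterate i)

lemma Measurable.birkhoffAverage (hf : Measurable f) (hg : Measurable g) (n : ℕ) :
    Measurable (birkhoffAverage ℝ f g n) :=
  (hf.birkhoffSum hg n).const_smul ((n : ℝ)⁻¹)

lemma Measurable.birkhoffMax (hf : Measurable f) (hg : Measurable g) (N : ℕ) :
    Measurable (birkhoffMax f g N) :=
  measurable_range_sup' fun k _ => hf.birkhoffSum hg k

namespace MeasureTheory.MeasurePreserving

lemma integrable_birkhoffMax (hf : MeasurePreserving f μ μ)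
    (hg : Integrable g μ) (N : ℕ) : Integrable (birkhoffMax f g N) μ :=
  sup'_induction (p := (Integrable · μ)) _ _ (fun _ h₁ _ h₂ => h₁.sup h₂) fun _ _ =>
    integrable_finsetSum _ fun i _ => (hf.iterate i).integrable_comp_of_integrable hg

lemma setIntegral_birkhoffMax_pos_nonneg (hf : MeasurePreserving f μ μ) (hgm : Measurable g)
    (hg : Integrable g μ) (N : ℕ) :
    0 ≤ ∫ x in {x | 0 < birkhoffMax f g N x}, g x ∂μ := by
  have hM := hf.integrable_birkhoffMax hg N
  have hMf : Integrable (fun x => birkhoffMax f g N (f x)) μ :=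
    hf.integrable_comp_of_integrable hM
  have hmeas : MeasurableSet {x | 0 < birkhoffMax f g N x} :=
    measurableSet_lt measurable_const (hf.measurable.birkhoffMax hgm N)
  have hzero : ∫ x, (birkhoffMax f g N x - birkhoffMax f g N (f x)) ∂μ = 0 := by
    rw [integral_sub hM hMf, ← integral_map hf.measurable.aemeasurable
      (hf.map_eq.symm ▸ hM.aestronglyMeasurable), hf.map_eq, sub_self]
  have hle := integral_mono (f := fun x => birkhoffMax f g N x - birkhoffMax f g N (f x))
    (hM.sub hMf) (hg.indicator hmeas)
    (birkhoffMax_sub_birkhoffMax_apply_le N)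
  rwa [hzero, integral_indicator hmeas] at hle

theorem setIntegral_exists_birkhoffSum_pos_nonneg
    (hf : MeasurePreserving f μ μ) (hgm : Measurable g) (hg : Integrable g μ) :
    0 ≤ ∫ x in {x | ∃ n, 0 < birkhoffSum f g n x}, g x ∂μ := by
  have hU : {x | ∃ n, 0 < birkhoffSum f g n x} = ⋃ N, {x | 0 < birkhoffMax f g N x} := by
    ext x
    simp only [Set.mem_ofPred_eq, Set.mem_iUnion, birkhoffMax_pos_iff]
    exact ⟨fun ⟨n, hn⟩ => ⟨n, n, le_rfl, hn⟩, fun ⟨_, k, _, hk⟩ => ⟨k, hk⟩⟩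
  rw [hU]
  refine ge_of_tendsto (tendsto_setIntegral_of_monotone
    (fun N => measurableSet_lt measurable_const (hf.measurable.birkhoffMax hgm N))
    (fun M N hMN x hx => ?_) hg.integrableOn) (Eventually.of_forall
      (hf.setIntegral_birkhoffMax_pos_nonneg hgm hg))
  exact hx.trans_le (birkhoffMax_mono hMN x)

theorem integral_nonneg_of_ae_exists_birkhoffSum_pos (hf : MeasurePreserving f μ μ)
    (hgm : Measurable g) (hg : Integrable g μ)
    (hpos : ∀ᵐ x ∂μ, ∃ n, 0 < birkhoffSum f g n x) : 0 ≤ ∫ x, g x ∂μ := by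
  have := hf.setIntegral_exists_birkhoffSum_pos_nonneg hgm hg
  rwa [Measure.restrict_eq_self_of_ae_mem (s := {x | ∃ n, 0 < birkhoffSum f g n x}) hpos]
    at this

end MeasureTheory.MeasurePreserving

end MaximalErgodic

section Ergodic

variable {α : Type*} [MeasurableSpace α] {μ : Measure α} [IsProbabilityMeasure μ]
  {f : α → α} {g : α → ℝ}

theorem Ergodic.ae_eventually_birkhoffAverage_lt (hf : Ergodic f μ) (hgm : Measurable g)
    (hg : Bornology.IsBounded (Set.range g)) :
    ∀ᵐ x ∂μ, ∀ b, ∫ y, g y ∂μ < b → ∀ᶠ n in atTop, birkhoffAverage ℝ f g n x < b := by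
  set L : α → ℝ := fun x => limsup (birkhoffAverage ℝ f g · x) atTop
  have hLm : Measurable L := .limsup fun n => hf.measurable.birkhoffAverage hgm n
  obtain ⟨c, hc⟩ := hf.toPreErgodic.ae_eq_const_of_ae_eq_comp hLm
    (funext (limsup_birkhoffAverage_apply hg))
  have hc_le : c ≤ ∫ y, g y ∂μ := by
    by_contra! hlt
    obtain ⟨β, hgβ, hβc⟩ := exists_between hlt
    have hgi : Integrable g μ :=
      let ⟨C, hC⟩ := isBounded_iff_forall_norm_le.1 hg
      .of_bound hgm.aestronglyMeasurable C (Eventually.of_forall fun y => hC _ ⟨y, rfl⟩)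
    have hpos : ∀ᵐ x ∂μ, ∃ n, 0 < birkhoffSum f (fun y => g y - β) n x := by
      filter_upwards [hc] with x hx
      have hfreq : ∃ᶠ n in atTop, β < birkhoffAverage ℝ f g n x :=
        frequently_lt_of_lt_limsup
          (isBoundedUnder_ge_birkhoffAverage hg x).isCoboundedUnder_le (show β < L x by rwa [hx])
      obtain ⟨n, hn, hn1⟩ := (hfreq.and_eventually (eventually_gt_atTop 0)).exists
      exact ⟨n, birkhoffSum_sub_const_pos hn1 hn⟩
    have := hf.toMeasurePreserving.integral_nonneg_of_ae_exists_birkhoffSum_pos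
      (g := fun y => g y - β) (hgm.sub measurable_const) (hgi.sub (integrable_const β)) hpos
    rw [integral_sub hgi (integrable_const β), integral_const, probReal_univ, one_smul] at this
    linarith
  filter_upwards [hc] with x hx b hb
  exact eventually_lt_of_limsup_lt (show L x < b by rw [hx]; exact hc_le.trans_lt hb)
    (isBoundedUnder_le_birkhoffAverage hg x)

theorem Ergodic.ae_tendsto_birkhoffAverage (hf : Ergodic f μ) (hgm : Measurable g)
    (hg : Bornology.IsBounded (Set.range g)) :
    ∀ᵐ x ∂μ, Tendsto (birkhoffAverage ℝ f g · x) atTop (𝓝 (∫ y, g y ∂μ)) := by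
  have hneg : Bornology.IsBounded (Set.range (-g)) := by
    obtain ⟨C, hC⟩ := isBounded_iff_forall_norm_le.1 hg
    exact isBounded_iff_forall_norm_le.2 ⟨C, by simpa using hC⟩
  filter_upwards [hf.ae_eventually_birkhoffAverage_lt hgm hg,
    hf.ae_eventually_birkhoffAverage_lt hgm.neg hneg] with x hlt hgt
  refine tendsto_order.2 ⟨fun a ha => ?_, hlt⟩
  filter_upwards [hgt (-a) (by simpa [integral_neg] using ha)] with n hn
  simpa [birkhoffAverage_neg] using hn

theorem Ergodic.ae_tendsto_birkhoffSum_div_birkhoffSum {h : α → ℝ} (hf : Ergodic f μ)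
    (hgm : Measurable g) (hg : Bornology.IsBounded (Set.range g))
    (hhm : Measurable h) (hh : Bornology.IsBounded (Set.range h)) (hint : ∫ y, h y ∂μ ≠ 0) :
    ∀ᵐ x ∂μ, Tendsto (fun n => birkhoffSum f g n x / birkhoffSum f h n x) atTop
      (𝓝 ((∫ y, g y ∂μ) / ∫ y, h y ∂μ)) := by
  filter_upwards [hf.ae_tendsto_birkhoffAverage hgm hg, hf.ae_tendsto_birkhoffAverage hhm hh]
    with x hgx hhx
  refine (hgx.div hhx hint).congr fun n => ?_
  rcases eq_or_ne n 0 with rfl | hn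
  · simp
  · simp only [birkhoffAverage, smul_eq_mul]
    exact mul_div_mul_left _ _ (by simpa using hn)

end Ergodic

lemma Bornology.IsBounded.range_indicator {α E : Type*} [SeminormedAddCommGroup E] {g : α → E}
    (hg : IsBounded (Set.range g)) (s : Set α) : IsBounded (Set.range (s.indicator g)) :=
  let ⟨C, hC⟩ := isBounded_iff_forall_norm_le.1 hg
  isBounded_iff_forall_norm_le.2 ⟨C, Set.forall_mem_range.2 fun x =>
    (norm_indicator_le_norm_self g x).trans (hC _ ⟨x, rfl⟩)⟩

lemma apply_iterate_of_apply_eq_sub_one {Ω β : Type*} {T : Ω → Ω} {X : ℤ → Ω → β}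
    (hshift : ∀ i ω, X i (T ω) = X (i - 1) ω) (m : ℕ) (i : ℤ) (ω : Ω) :
    X i (T^[m] ω) = X (i - m) ω := by
  induction m generalizing i with
  | zero => simp
  | succ m ih =>
    rw [Function.iterate_succ_apply', hshift, ih]
    congr 1
    push_cast
    ring

theorem stmt10_general {Ω : Type*} [m0 : MeasurableSpace Ω] (P : Measure Ω) [IsProbabilityMeasure P]
    (d w : ℕ) (X : ℤ → Ω → (Fin d → ℝ))
    (hXmeas : ∀ i, Measurable (X i))
    (T : Ω → Ω) (hT : Ergodic T P)
    (hshift : ∀ i ω, X i (T ω) = X (i - 1) ω)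
    -- the block `X_{i-ω}^{i-1}` viewed as a vector in Euclidean space `ℝ^{dω}`
    (block : ℤ → Ω → EuclideanSpace ℝ (Fin w × Fin d))
    (hblock : ∀ i ω p, block i ω p = X (i - w + (p.1 : ℤ)) ω p.2)
    (s : EuclideanSpace ℝ (Fin w × Fin d)) (c : ℝ)
    (hpos : 0 < P {ω | ‖block 0 ω - s‖ ^ 2 ≤ c}) :
    ∀ f : (Fin d → ℝ) → ℝ, Continuous f → (∃ C, ∀ x, |f x| ≤ C) →
      ∀ᵐ ω ∂P,
        Tendsto (fun j : ℕ =>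
            (∑ m ∈ (Finset.range (j - w)).filter
                (fun m : ℕ => ‖block (-(m : ℤ)) ω - s‖ ^ 2 ≤ c), f (X (-(m : ℤ)) ω))
              / ((Finset.range (j - w)).filter
                (fun m : ℕ => ‖block (-(m : ℤ)) ω - s‖ ^ 2 ≤ c)).card)
          atTop
          (nhds ((∫ ω' in {ω' | ‖block 0 ω' - s‖ ^ 2 ≤ c}, f (X 0 ω') ∂P)
            / (P {ω' | ‖block 0 ω' - s‖ ^ 2 ≤ c}).toReal)) := by
  intro f hf ⟨C, hC⟩
  set A := {ω | ‖block 0 ω - s‖ ^ 2 ≤ c}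
  have hX (m : ℕ) ω : X (-(m : ℤ)) ω = X 0 (T^[m] ω) := by
    rw [apply_iterate_of_apply_eq_sub_one hshift, zero_sub]
  have hblock_iterate (m : ℕ) ω : block (-(m : ℤ)) ω = block 0 (T^[m] ω) := by
    ext p
    rw [hblock, hblock, apply_iterate_of_apply_eq_sub_one hshift]
    ring_nf
  have hA : MeasurableSet A := by
    have hmeas : Measurable (block 0) :=
      (WithLp.measurable_toLp 2 _).comp <| measurable_pi_lambda _ fun p => by
        simp_rw [hblock]
        exact (measurable_pi_apply p.2).comp (hXmeas _)
    exact measurableSet_le ((hmeas.sub_const s).norm.pow_const 2) measurable_const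
  have hfX_bdd : Bornology.IsBounded (Set.range (f ∘ X 0)) :=
    isBounded_iff_forall_norm_le.2 ⟨C, Set.forall_mem_range.2 fun ω => hC _⟩
  have hA_pos : ∫ ω, A.indicator (1 : Ω → ℝ) ω ∂P ≠ 0 := by
    rw [integral_indicator_one hA, measureReal_def]
    exact (ENNReal.toReal_pos hpos.ne' (measure_ne_top P A)).ne'
  have hratio := hT.ae_tendsto_birkhoffSum_div_birkhoffSum (h := A.indicator 1)
    ((hf.measurable.comp (hXmeas 0)).indicator hA) (hfX_bdd.range_indicator A)
    (measurable_const.indicator hA)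
    (((Set.finite_singleton 1).isBounded.subset Set.range_const_subset).range_indicator A) hA_pos
  rw [integral_indicator hA, integral_indicator_one hA, measureReal_def] at hratio
  filter_upwards [hratio] with ω hω
  refine (hω.comp (tendsto_sub_atTop_nat w)).congr fun j => ?_
  simp only [A, Function.comp_apply, birkhoffSum_indicator_setOf, hX, hblock_iterate,
    Pi.one_apply, sum_const, nsmul_eq_mul, mul_one]

/-- Convergence of the empirical conditional measures (equation (2) in the CORN
universality proof): for a stationary ergodic process `(X_n)_{n∈ℤ}` in the positive
orthant of `ℝ^d` (realized by an ergodic shift `T` with `X_i ∘ T = X_{i-1}`), a fixed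
pattern `s ∈ ℝ^{dω}` and threshold `c > 0` with
`P(‖X_{-ω}^{-1} - s‖² ≤ c) > 0`, the empirical measure `P_{j,s}` putting equal mass on
those `X_i`, `1-j+ω ≤ i ≤ 0`, whose preceding block `X_{i-ω}^{i-1}` satisfies
`‖X_{i-ω}^{i-1} - s‖² ≤ c`, integrates every bounded continuous `f` to
`E[f(X_0) | ‖X_{-ω}^{-1} - s‖² ≤ c]` in the limit `j → ∞`, almost surely. -/
theorem stmt10 {Ω : Type*} [m0 : MeasurableSpace Ω] (P : Measure Ω) [IsProbabilityMeasure P]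
    (d w : ℕ) (hw : 0 < w) (X : ℤ → Ω → (Fin d → ℝ))
    (hXmeas : ∀ i, Measurable (X i)) (hXpos : ∀ i ω j, 0 < X i ω j)
    (T : Ω → Ω) (hT : Ergodic T P)
    (hshift : ∀ i ω, X i (T ω) = X (i - 1) ω)
    -- the block `X_{i-ω}^{i-1}` viewed as a vector in Euclidean space `ℝ^{dω}`
    (block : ℤ → Ω → EuclideanSpace ℝ (Fin w × Fin d))
    (hblock : ∀ i ω p, block i ω p = X (i - w + (p.1 : ℤ)) ω p.2)
    (s : EuclideanSpace ℝ (Fin w × Fin d)) (c : ℝ) (hc : 0 < c)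
    (hpos : 0 < P {ω | ‖block 0 ω - s‖ ^ 2 ≤ c}) :
    ∀ f : (Fin d → ℝ) → ℝ, Continuous f → (∃ C, ∀ x, |f x| ≤ C) →
      ∀ᵐ ω ∂P,
        Tendsto (fun j : ℕ =>
            (∑ m ∈ (Finset.range (j - w)).filter
                (fun m : ℕ => ‖block (-(m : ℤ)) ω - s‖ ^ 2 ≤ c), f (X (-(m : ℤ)) ω))
              / ((Finset.range (j - w)).filter
                (fun m : ℕ => ‖block (-(m : ℤ)) ω - s‖ ^ 2 ≤ c)).card)
          atTop
          (nhds ((∫ ω' in {ω' | ‖block 0 ω' - s‖ ^ 2 ≤ c}, f (X 0 ω') ∂P)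
            / (P {ω' | ‖block 0 ω' - s‖ ^ 2 ≤ c}).toReal)) :=
  stmt10_general (m0 := m0) P d w X hXmeas T hT hshift block hblock s c hpos
end

section
/- Let Q_n (n in N union {infinity}) be probability distributions on the positive orthant R^d_+ such that E_{Q_n}[|log U^{(j)}|] < infinity for all coordinates j, and suppose Q_n -> Q_infinity weakly. Let b_n be a log-optimal portfolio for Q_n, i.e., b_n maximizes E_{Q_n}[log <b, U>] over the simplex Delta_d. Then for Q_infinity-almost every u, lim_{n -> infinity} <b_n, u> = <b*, u>, where the value <b*, u> is the same for every log-optimal portfolio b* of Q_infinity. -/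
/-!
A portfolio `b` is log-optimal for `P` iff it satisfies the Kuhn–Tucker conditions
`E_P[⟨c, U⟩ / ⟨b, U⟩] ≤ 1` for every `c` in the simplex: one direction is Fatou's lemma for the
difference quotients of `c ↦ E_P[log ⟨c, U⟩]` along the segment from `b` to `c`, the other is
`log x ≤ x - 1`. Unlike optimality, the Kuhn–Tucker conditions survive weak limits: if
`b_n → b` then `⟨c, u⟩ / ⟨b_n, u⟩` eventually dominates a continuous minorant converging to
`⟨c, u⟩ / ⟨b, u⟩`, and the portmanteau theorem bounds its lower integral under `Q_∞`. Hence
every cluster point of `(b_n)` is log-optimal for `Q_∞`. By strict concavity of `log` any two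
log-optimal portfolios have `Q_∞`-a.e. the same return, and by continuity and separability this
holds for all of them on one conull set; compactness of the simplex then gives the convergence.
-/

open MeasureTheory Filter Topology
open scoped ENNReal

section General
variable {α : Type*} [MeasurableSpace α] {μ : Measure α}

theorem lintegral_le_of_ae_tendsto {ι : Type*} {l : Filter ι} [l.NeBot] [l.IsCountablyGenerated]
    {f : ι → α → ℝ≥0∞} {F : α → ℝ≥0∞} {C : ℝ≥0∞} (hf : ∀ i, AEMeasurable (f i) μ)
    (hlim : ∀ᵐ a ∂μ, Tendsto (fun i => f i a) l (𝓝 (F a)))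
    (hC : ∀ᶠ i in l, ∫⁻ a, f i a ∂μ ≤ C) : ∫⁻ a, F a ∂μ ≤ C :=
  calc ∫⁻ a, F a ∂μ = ∫⁻ a, liminf (fun i => f i a) l ∂μ :=
        lintegral_congr_ae (hlim.mono fun _ ha => ha.liminf_eq.symm)
    _ ≤ liminf (fun i => ∫⁻ a, f i a ∂μ) l := lintegral_liminf_le' hf
    _ ≤ C := liminf_le_of_frequently_le' hC.frequently

theorem integrable_of_lintegral_ofReal_le {f : α → ℝ} {a : ℝ} (hf : AEStronglyMeasurable f μ)
    (hf0 : 0 ≤ᵐ[μ] f) (h : ∫⁻ x, ENNReal.ofReal (f x) ∂μ ≤ ENNReal.ofReal a) : Integrable f μ :=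
  ⟨hf, (hasFiniteIntegral_iff_ofReal hf0).2 (h.trans_lt ENNReal.ofReal_lt_top)⟩

theorem integral_le_of_lintegral_ofReal_le {f : α → ℝ} {a : ℝ} (ha : 0 ≤ a)
    (hf : AEStronglyMeasurable f μ) (hf0 : 0 ≤ᵐ[μ] f)
    (h : ∫⁻ x, ENNReal.ofReal (f x) ∂μ ≤ ENNReal.ofReal a) : ∫ x, f x ∂μ ≤ a := by
  rw [integral_eq_lintegral_of_nonneg_ae hf0 hf]
  exact ENNReal.toReal_le_of_le_ofReal ha h

theorem lintegral_ofReal_add_le_of_tendsto [IsProbabilityMeasure μ] {ι : Type*} {l : Filter ι}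
    [l.NeBot] [l.IsCountablyGenerated] {f : ι → α → ℝ} {F : α → ℝ} {a : ℝ}
    (hf_meas : ∀ i, Measurable (f i)) (hf_int : ∀ᶠ i in l, Integrable (f i) μ)
    (hf_le : ∀ᶠ i in l, ∫ x, f i x ∂μ ≤ 0) (hf_ge : ∀ᶠ i in l, ∀ᵐ x ∂μ, -a ≤ f i x)
    (hlim : ∀ᵐ x ∂μ, Tendsto (fun i => f i x) l (𝓝 (F x))) :
    ∫⁻ x, ENNReal.ofReal (F x + a) ∂μ ≤ ENNReal.ofReal a := by
  refine lintegral_le_of_ae_tendsto (f := fun i x => ENNReal.ofReal (f i x + a))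
    (fun i => ((hf_meas i).add_const a).ennreal_ofReal.aemeasurable)
    (hlim.mono fun x hx => (ENNReal.continuous_ofReal.tendsto _).comp (hx.add_const a)) ?_
  filter_upwards [hf_int, hf_le, hf_ge] with i hint hle hge
  have hint' : Integrable (fun x => f i x + a) μ := hint.add (integrable_const a)
  rw [← ofReal_integral_eq_lintegral_ofReal hint'
    (hge.mono fun x hx => by simp only [Pi.zero_apply]; linarith)]
  refine ENNReal.ofReal_le_ofReal ?_
  rw [integral_add hint (integrable_const a), integral_const, probReal_univ, one_smul]
  linarith

theorem ae_forall_mem_eq_of_continuous {β γ : Type*} [TopologicalSpace β]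
    [TopologicalSpace.PseudoMetrizableSpace β] [TopologicalSpace.SeparableSpace β]
    [TopologicalSpace γ] [T2Space γ] {s : Set β} {f : β → α → γ} {g : α → γ}
    (hf : ∀ a, Continuous fun b => f b a) (h : ∀ b ∈ s, ∀ᵐ a ∂μ, f b a = g a) :
    ∀ᵐ a ∂μ, ∀ b ∈ s, f b a = g a := by
  obtain ⟨t, hts, htc, hst⟩ :=
    (TopologicalSpace.IsSeparable.of_separableSpace s).exists_countable_dense_subset
  filter_upwards [(ae_ball_iff htc).2 fun b hb => h b (hts hb)] with a ha b hb
  exact closure_minimal ha (isClosed_eq (hf a) continuous_const) (hst hb)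

end General

namespace Portfolio

variable {ι : Type*} [Fintype ι]

def IsLogOptimal (P : Measure (ι → ℝ)) (b : ι → ℝ) : Prop :=
  b ∈ stdSimplex ℝ ι ∧
    ∀ c ∈ stdSimplex ℝ ι, ∫ u, Real.log (c ⬝ᵥ u) ∂P ≤ ∫ u, Real.log (b ⬝ᵥ u) ∂P

-- A lower integral, so that the condition needs no integrability assumption on the ratio.
def SatisfiesKuhnTucker (P : Measure (ι → ℝ)) (b : ι → ℝ) : Prop :=
  ∀ c ∈ stdSimplex ℝ ι, ∫⁻ u, ENNReal.ofReal (c ⬝ᵥ u / b ⬝ᵥ u) ∂P ≤ 1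

section Simplex
variable {b u : ι → ℝ}

theorem nonempty_of_mem_stdSimplex (hb : b ∈ stdSimplex ℝ ι) : Nonempty ι := by
  by_contra h
  rw [not_nonempty_iff] at h
  simpa using hb.2

theorem dotProduct_le_of_mem_stdSimplex {a : ℝ} (hb : b ∈ stdSimplex ℝ ι) (hu : ∀ j, u j ≤ a) :
    b ⬝ᵥ u ≤ a :=
  calc b ⬝ᵥ u ≤ ∑ j, b j * a :=
        Finset.sum_le_sum fun j _ => mul_le_mul_of_nonneg_left (hu j) (hb.1 j)
    _ = a := by rw [← Finset.sum_mul, hb.2, one_mul]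

theorem le_dotProduct_of_mem_stdSimplex {a : ℝ} (hb : b ∈ stdSimplex ℝ ι) (hu : ∀ j, a ≤ u j) :
    a ≤ b ⬝ᵥ u :=
  calc a = ∑ j, b j * a := by rw [← Finset.sum_mul, hb.2, one_mul]
    _ ≤ b ⬝ᵥ u := Finset.sum_le_sum fun j _ => mul_le_mul_of_nonneg_left (hu j) (hb.1 j)

theorem exists_le_dotProduct (hb : b ∈ stdSimplex ℝ ι) (u : ι → ℝ) : ∃ k, u k ≤ b ⬝ᵥ u :=
  have := nonempty_of_mem_stdSimplex hb
  let ⟨k, hk⟩ := Finite.exists_min u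
  ⟨k, le_dotProduct_of_mem_stdSimplex hb hk⟩

theorem exists_dotProduct_le (hb : b ∈ stdSimplex ℝ ι) (u : ι → ℝ) : ∃ k, b ⬝ᵥ u ≤ u k :=
  have := nonempty_of_mem_stdSimplex hb
  let ⟨k, hk⟩ := Finite.exists_max u
  ⟨k, dotProduct_le_of_mem_stdSimplex hb hk⟩

theorem dotProduct_pos_of_mem_stdSimplex (hb : b ∈ stdSimplex ℝ ι) (hu : ∀ j, 0 < u j) :
    0 < b ⬝ᵥ u :=
  let ⟨k, hk⟩ := exists_le_dotProduct hb u
  (hu k).trans_le hk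

theorem add_inv_smul_sub_mem_stdSimplex {c : ι → ℝ} {x : ℝ} (hb : b ∈ stdSimplex ℝ ι)
    (hc : c ∈ stdSimplex ℝ ι) (hx : 1 ≤ x) : b + x⁻¹ • (c - b) ∈ stdSimplex ℝ ι :=
  (convex_stdSimplex ℝ ι).add_smul_sub_mem hb hc
    ⟨inv_nonneg.2 (by linarith), inv_le_one_of_one_le₀ hx⟩

theorem dotProduct_div_dotProduct_nonneg {c : ι → ℝ} (hc : c ∈ stdSimplex ℝ ι)
    (hb : b ∈ stdSimplex ℝ ι) (hu : ∀ j, 0 < u j) : 0 ≤ c ⬝ᵥ u / b ⬝ᵥ u :=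
  div_nonneg (dotProduct_pos_of_mem_stdSimplex hc hu).le (dotProduct_pos_of_mem_stdSimplex hb hu).le

theorem abs_log_dotProduct_le (hb : b ∈ stdSimplex ℝ ι) (hu : ∀ j, 0 < u j) :
    |Real.log (b ⬝ᵥ u)| ≤ ∑ j, |Real.log (u j)| := by
  have hle : ∀ k, |Real.log (u k)| ≤ ∑ j, |Real.log (u j)| := fun k =>
    Finset.single_le_sum (f := fun j => |Real.log (u j)|) (fun j _ => abs_nonneg _)
      (Finset.mem_univ k)
  obtain ⟨k, hk⟩ := exists_le_dotProduct hb u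
  obtain ⟨k', hk'⟩ := exists_dotProduct_le hb u
  rw [abs_le]
  constructor
  · calc -∑ j, |Real.log (u j)| ≤ Real.log (u k) := neg_le_of_abs_le (hle k)
      _ ≤ Real.log (b ⬝ᵥ u) := Real.log_le_log (hu k) hk
  · calc Real.log (b ⬝ᵥ u) ≤ Real.log (u k') :=
          Real.log_le_log (dotProduct_pos_of_mem_stdSimplex hb hu) hk'
      _ ≤ ∑ j, |Real.log (u j)| := (le_abs_self _).trans (hle k')

end Simplex

theorem neg_two_le_mul_log_one_add_div {x y : ℝ} (hx : 2 ≤ x) (hy : 0 ≤ y) :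
    -2 ≤ x * Real.log (1 + (y - 1) / x) := by
  set w := (y - 1) / x
  have hxw : x * w = y - 1 := mul_div_cancel₀ _ (by linarith)
  have hw : -(1 / 2) ≤ w := by
    rw [le_div_iff₀ (by linarith)]; linarith
  have hw1 : 0 < 1 + w := by linarith
  have hlog : w / (1 + w) ≤ Real.log (1 + w) := by
    convert Real.one_sub_inv_le_log_of_pos hw1 using 1
    field_simp [hw1.ne']
    ring
  calc -2 ≤ x * (w / (1 + w)) := by
        rw [← mul_div_assoc, le_div_iff₀ (by linarith), hxw]; linarith
    _ ≤ x * Real.log (1 + w) := mul_le_mul_of_nonneg_left hlog (by linarith)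

theorem log_dotProduct_segment_sub_log {b c u : ι → ℝ} {x : ℝ} (hx : 1 < x)
    (hb : b ∈ stdSimplex ℝ ι) (hc : c ∈ stdSimplex ℝ ι) (hu : ∀ j, 0 < u j) :
    Real.log ((b + x⁻¹ • (c - b)) ⬝ᵥ u) - Real.log (b ⬝ᵥ u) =
      Real.log (1 + (c ⬝ᵥ u / b ⬝ᵥ u - 1) / x) := by
  have hbu := dotProduct_pos_of_mem_stdSimplex hb hu
  have hcu := dotProduct_pos_of_mem_stdSimplex hc hu
  have hx0 : 0 < x := by linarith
  have hsegment : (b + x⁻¹ • (c - b)) ⬝ᵥ u = (1 - x⁻¹) * b ⬝ᵥ u + x⁻¹ * c ⬝ᵥ u := by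
    simp only [add_dotProduct, smul_dotProduct, sub_dotProduct, smul_eq_mul]
    ring
  have hpos : 0 < (1 - x⁻¹) * b ⬝ᵥ u + x⁻¹ * c ⬝ᵥ u := by
    have : 0 < 1 - x⁻¹ := sub_pos.2 (inv_lt_one_of_one_lt₀ hx)
    positivity
  rw [hsegment, ← Real.log_div hpos.ne' hbu.ne']
  congr 1
  field_simp
  ring

variable {P : Measure (ι → ℝ)} {b c : ι → ℝ}

theorem integrable_log_dotProduct (hpos : ∀ᵐ u ∂P, ∀ j, 0 < u j)
    (hlog : ∀ j, Integrable (fun u => |Real.log (u j)|) P) (hb : b ∈ stdSimplex ℝ ι) :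
    Integrable (fun u => Real.log (b ⬝ᵥ u)) P := by
  refine (integrable_finsetSum Finset.univ fun j _ => hlog j).mono'
    (by fun_prop : Measurable fun u : ι → ℝ => Real.log (b ⬝ᵥ u)).aestronglyMeasurable ?_
  filter_upwards [hpos] with u hu
  exact abs_log_dotProduct_le hb hu

theorem ae_forall_pos_of_measure_eq_one [IsProbabilityMeasure P]
    (h : P {u | ∀ j, 0 < u j} = 1) : ∀ᵐ u ∂P, ∀ j, 0 < u j := by
  have hmeas : MeasurableSet {u : ι → ℝ | ∀ j, 0 < u j} := by measurability
  exact (ae_iff_measure_eq hmeas.nullMeasurableSet).2 (by rw [h, measure_univ])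

theorem IsLogOptimal.ae_dotProduct_eq {b' : ι → ℝ} (hpos : ∀ᵐ u ∂P, ∀ j, 0 < u j)
    (hlog : ∀ j, Integrable (fun u => |Real.log (u j)|) P) (hb : IsLogOptimal P b)
    (hb' : IsLogOptimal P b') : ∀ᵐ u ∂P, b ⬝ᵥ u = b' ⬝ᵥ u := by
  set m := (1 / 2 : ℝ) • b + (1 / 2 : ℝ) • b'
  have hm : m ∈ stdSimplex ℝ ι :=
    convex_stdSimplex ℝ ι hb.1 hb'.1 (by norm_num) (by norm_num) (by norm_num)
  have hm_apply : ∀ u, m ⬝ᵥ u = 1 / 2 * (b ⬝ᵥ u) + 1 / 2 * (b' ⬝ᵥ u) := fun u => by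
    simp only [m, add_dotProduct, smul_dotProduct, smul_eq_mul]
  set h := fun u => Real.log (m ⬝ᵥ u) - (Real.log (b ⬝ᵥ u) + Real.log (b' ⬝ᵥ u)) / 2
  have hlogm := integrable_log_dotProduct hpos hlog hm
  have hlogb := integrable_log_dotProduct hpos hlog hb.1
  have hlogb' := integrable_log_dotProduct hpos hlog hb'.1
  have hsum : Integrable (fun u => Real.log (b ⬝ᵥ u) + Real.log (b' ⬝ᵥ u)) P := hlogb.add hlogb'
  have hh_int : Integrable h P := hlogm.sub (hsum.div_const 2)
  have hh_nonneg : 0 ≤ᵐ[P] h := by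
    filter_upwards [hpos] with u hu
    have := strictConcaveOn_log_Ioi.concaveOn.2
      (dotProduct_pos_of_mem_stdSimplex hb.1 hu) (dotProduct_pos_of_mem_stdSimplex hb'.1 hu)
      (by norm_num : (0 : ℝ) ≤ 1 / 2) (by norm_num : (0 : ℝ) ≤ 1 / 2) (by norm_num)
    simp only [h, Pi.zero_apply, hm_apply, smul_eq_mul] at this ⊢
    linarith
  have hh_int_nonpos : ∫ u, h u ∂P ≤ 0 := by
    have hvalue : ∫ u, Real.log (b ⬝ᵥ u) ∂P = ∫ u, Real.log (b' ⬝ᵥ u) ∂P :=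
      le_antisymm (hb'.2 b hb.1) (hb.2 b' hb'.1)
    simp only [h]
    rw [integral_sub hlogm (hsum.div_const 2), integral_div, integral_add hlogb hlogb']
    linarith [hb.2 m hm]
  have hh_zero : h =ᵐ[P] 0 := (integral_eq_zero_iff_of_nonneg_ae hh_nonneg hh_int).1
    (le_antisymm hh_int_nonpos (integral_nonneg_of_ae hh_nonneg))
  filter_upwards [hh_zero, hpos] with u hu0 hu
  by_contra hne
  have := strictConcaveOn_log_Ioi.2
    (dotProduct_pos_of_mem_stdSimplex hb.1 hu) (dotProduct_pos_of_mem_stdSimplex hb'.1 hu)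
    hne (by norm_num : (0 : ℝ) < 1 / 2) (by norm_num : (0 : ℝ) < 1 / 2) (by norm_num)
  simp only [h, Pi.zero_apply, hm_apply, smul_eq_mul] at hu0 this
  linarith

theorem SatisfiesKuhnTucker.isLogOptimal [IsProbabilityMeasure P]
    (hpos : ∀ᵐ u ∂P, ∀ j, 0 < u j) (hlog : ∀ j, Integrable (fun u => |Real.log (u j)|) P)
    (hb : b ∈ stdSimplex ℝ ι) (hKT : SatisfiesKuhnTucker P b) : IsLogOptimal P b := by
  refine ⟨hb, fun c hc => ?_⟩
  set r := fun u => c ⬝ᵥ u / b ⬝ᵥ u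
  have hr_meas : AEStronglyMeasurable r P :=
    (by fun_prop : Measurable fun u : ι → ℝ => c ⬝ᵥ u / b ⬝ᵥ u).aestronglyMeasurable
  have hr_nonneg : 0 ≤ᵐ[P] r := hpos.mono fun _ hu => dotProduct_div_dotProduct_nonneg hc hb hu
  have hr_le : ∫⁻ u, ENNReal.ofReal (r u) ∂P ≤ ENNReal.ofReal 1 := by
    rw [ENNReal.ofReal_one]; exact hKT c hc
  have hr_int := integrable_of_lintegral_ofReal_le hr_meas hr_nonneg hr_le
  have hpointwise : ∀ᵐ u ∂P, Real.log (c ⬝ᵥ u) ≤ Real.log (b ⬝ᵥ u) + (r u - 1) := by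
    filter_upwards [hpos] with u hu
    have hbu := dotProduct_pos_of_mem_stdSimplex hb hu
    have hcu := dotProduct_pos_of_mem_stdSimplex hc hu
    have := Real.log_le_sub_one_of_pos (div_pos hcu hbu)
    rw [Real.log_div hcu.ne' hbu.ne'] at this
    linarith
  have hlogb := integrable_log_dotProduct hpos hlog hb
  have hr_sub : Integrable (fun u => r u - 1) P := hr_int.sub (integrable_const 1)
  have hrhs : Integrable (fun u => Real.log (b ⬝ᵥ u) + (r u - 1)) P := hlogb.add hr_sub
  have := integral_mono_ae (integrable_log_dotProduct hpos hlog hc) hrhs hpointwise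
  rw [integral_add hlogb hr_sub, integral_sub hr_int (integrable_const 1), integral_const,
    probReal_univ, one_smul] at this
  linarith [integral_le_of_lintegral_ofReal_le zero_le_one hr_meas hr_nonneg hr_le]

theorem IsLogOptimal.satisfiesKuhnTucker [IsProbabilityMeasure P]
    (hpos : ∀ᵐ u ∂P, ∀ j, 0 < u j) (hlog : ∀ j, Integrable (fun u => |Real.log (u j)|) P)
    (hb : IsLogOptimal P b) : SatisfiesKuhnTucker P b := by
  intro c hc
  set r := fun u => c ⬝ᵥ u / b ⬝ᵥ u
  set G : ℝ → (ι → ℝ) → ℝ := fun x u =>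
    x * (Real.log ((b + x⁻¹ • (c - b)) ⬝ᵥ u) - Real.log (b ⬝ᵥ u))
  have hr_nonneg : ∀ᵐ u ∂P, 0 ≤ r u :=
    hpos.mono fun _ hu => dotProduct_div_dotProduct_nonneg hc hb.1 hu
  have hlogb := integrable_log_dotProduct hpos hlog hb.1
  have hlog_mix : ∀ x : ℝ, 1 ≤ x → Integrable (fun u => Real.log ((b + x⁻¹ • (c - b)) ⬝ᵥ u)) P :=
    fun x hx => integrable_log_dotProduct hpos hlog (add_inv_smul_sub_mem_stdSimplex hb.1 hc hx)
  have hG_eq : ∀ᵐ u ∂P, ∀ x : ℝ, 1 < x → G x u = x * Real.log (1 + (r u - 1) / x) := by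
    filter_upwards [hpos] with u hu x hx
    simp only [G, r]
    rw [log_dotProduct_segment_sub_log hx hb.1 hc hu]
  have hfatou : ∫⁻ u, ENNReal.ofReal (r u - 1 + 2) ∂P ≤ ENNReal.ofReal 2 := by
    refine lintegral_ofReal_add_le_of_tendsto (l := atTop) (f := G)
      (fun x => by fun_prop) ?_ ?_ ?_ ?_
    · filter_upwards [eventually_ge_atTop 1] with x hx
      exact ((hlog_mix x hx).sub hlogb).const_mul x
    · filter_upwards [eventually_ge_atTop 1] with x hx
      simp only [G]
      rw [integral_const_mul, integral_sub (hlog_mix x hx) hlogb]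
      exact mul_nonpos_of_nonneg_of_nonpos (by linarith)
        (sub_nonpos.2 (hb.2 _ (add_inv_smul_sub_mem_stdSimplex hb.1 hc hx)))
    · filter_upwards [eventually_ge_atTop 2] with x hx
      filter_upwards [hG_eq, hr_nonneg] with u hu hru
      rw [hu x (by linarith)]
      exact neg_two_le_mul_log_one_add_div hx hru
    · filter_upwards [hG_eq] with u hu
      exact (Real.tendsto_mul_log_one_add_div_atTop _).congr'
        ((eventually_gt_atTop 1).mono fun x hx => (hu x hx).symm)
  have hsplit : ∀ᵐ u ∂P, ENNReal.ofReal (r u - 1 + 2) = ENNReal.ofReal (r u) + 1 := by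
    filter_upwards [hr_nonneg] with u hu
    rw [show r u - 1 + 2 = r u + 1 by ring, ENNReal.ofReal_add hu zero_le_one, ENNReal.ofReal_one]
  rw [lintegral_congr_ae hsplit, lintegral_add_right _ measurable_const, lintegral_one,
    measure_univ, ENNReal.ofReal_ofNat, ← one_add_one_eq_two] at hfatou
  exact (ENNReal.add_le_add_iff_right ENNReal.one_ne_top).1 hfatou

section Smoothing
variable (c b : ι → ℝ) (ε : ℝ)

-- The `max`es only act off the positive orthant, where they keep the ratio continuous and
-- nonnegative.
noncomputable def smoothedRatio (u : ι → ℝ) : ℝ :=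
  max (c ⬝ᵥ u) 0 / max (b ⬝ᵥ u + ε * ∑ j, u j) ε

variable {c b ε}

theorem continuous_smoothedRatio (hε : 0 < ε) : Continuous (smoothedRatio c b ε) :=
  Continuous.div (by fun_prop) (by fun_prop) fun _ => (hε.trans_le (le_max_right _ _)).ne'

theorem smoothedRatio_nonneg (hε : 0 ≤ ε) (u : ι → ℝ) : 0 ≤ smoothedRatio c b ε u :=
  div_nonneg (le_max_right _ _) (hε.trans (le_max_right _ _))

theorem smoothedRatio_le_div {b' u : ι → ℝ} (hc : c ∈ stdSimplex ℝ ι) (hb' : b' ∈ stdSimplex ℝ ι)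
    (hu : ∀ j, 0 < u j) (hb'b : ∀ j, b' j ≤ b j + ε) :
    smoothedRatio c b ε u ≤ c ⬝ᵥ u / b' ⬝ᵥ u := by
  have hb'u : b' ⬝ᵥ u ≤ b ⬝ᵥ u + ε * ∑ j, u j :=
    calc b' ⬝ᵥ u ≤ ∑ j, (b j + ε) * u j :=
          Finset.sum_le_sum fun j _ => mul_le_mul_of_nonneg_right (hb'b j) (hu j).le
      _ = b ⬝ᵥ u + ε * ∑ j, u j := by
          simp only [add_mul, Finset.sum_add_distrib, Finset.mul_sum, dotProduct]
  rw [smoothedRatio, max_eq_left (dotProduct_pos_of_mem_stdSimplex hc hu).le]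
  exact div_le_div_of_nonneg_left (dotProduct_pos_of_mem_stdSimplex hc hu).le
    (dotProduct_pos_of_mem_stdSimplex hb' hu) (hb'u.trans (le_max_left _ _))

theorem tendsto_smoothedRatio {u : ι → ℝ} (hc : c ∈ stdSimplex ℝ ι) (hb : b ∈ stdSimplex ℝ ι)
    (hu : ∀ j, 0 < u j) :
    Tendsto (fun ε => smoothedRatio c b ε u) (𝓝 0) (𝓝 (c ⬝ᵥ u / b ⬝ᵥ u)) := by
  have hbu := dotProduct_pos_of_mem_stdSimplex hb hu
  have hden : Tendsto (fun ε => max (b ⬝ᵥ u + ε * ∑ j, u j) ε) (𝓝 0) (𝓝 (b ⬝ᵥ u)) := by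
    have := ((continuous_const.add (continuous_id.mul continuous_const)).max
      continuous_id).tendsto (0 : ℝ) (f := fun ε => max (b ⬝ᵥ u + ε * ∑ j, u j) ε)
    simpa [max_eq_left hbu.le] using this
  rw [← max_eq_left (dotProduct_pos_of_mem_stdSimplex hc hu).le]
  exact tendsto_const_nhds.div hden hbu.ne'

end Smoothing

section WeakLimit
variable {Q : ℕ → ProbabilityMeasure (ι → ℝ)} {P : ProbabilityMeasure (ι → ℝ)}
  {bs : ℕ → ι → ℝ}

theorem lintegral_smoothedRatio_le_one (hQ : Tendsto Q atTop (𝓝 P))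
    (hposQ : ∀ n, ∀ᵐ u ∂(Q n : Measure (ι → ℝ)), ∀ j, 0 < u j)
    (hbs : ∀ n, bs n ∈ stdSimplex ℝ ι) (hlim : Tendsto bs atTop (𝓝 b))
    (hKT : ∀ n, SatisfiesKuhnTucker (Q n) (bs n)) (hc : c ∈ stdSimplex ℝ ι) {ε : ℝ}
    (hε : 0 < ε) : ∫⁻ u, ENNReal.ofReal (smoothedRatio c b ε u) ∂(P : Measure (ι → ℝ)) ≤ 1 := by
  refine (lintegral_le_liminf_lintegral_of_forall_isOpen_measure_le_liminf_measure
    (μs := fun n => (Q n : Measure (ι → ℝ))) (continuous_smoothedRatio hε)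
    (smoothedRatio_nonneg hε.le) fun G hG =>
      ProbabilityMeasure.le_liminf_measure_open_of_tendsto hQ hG).trans ?_
  refine liminf_le_of_frequently_le' (Eventually.frequently ?_)
  have hnear : ∀ᶠ n in atTop, ∀ j, bs n j ≤ b j + ε := eventually_all.2 fun j =>
    (tendsto_pi_nhds.1 hlim j).eventually (eventually_le_nhds (lt_add_of_pos_right _ hε))
  filter_upwards [hnear] with n hn
  calc ∫⁻ u, ENNReal.ofReal (smoothedRatio c b ε u) ∂(Q n : Measure (ι → ℝ))
      ≤ ∫⁻ u, ENNReal.ofReal (c ⬝ᵥ u / bs n ⬝ᵥ u) ∂(Q n : Measure (ι → ℝ)) :=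
        lintegral_mono_ae <| (hposQ n).mono fun u hu =>
          ENNReal.ofReal_le_ofReal (smoothedRatio_le_div hc (hbs n) hu hn)
    _ ≤ 1 := hKT n c hc

theorem satisfiesKuhnTucker_of_tendsto (hQ : Tendsto Q atTop (𝓝 P))
    (hposQ : ∀ n, ∀ᵐ u ∂(Q n : Measure (ι → ℝ)), ∀ j, 0 < u j)
    (hposP : ∀ᵐ u ∂(P : Measure (ι → ℝ)), ∀ j, 0 < u j) (hbs : ∀ n, bs n ∈ stdSimplex ℝ ι)
    (hb : b ∈ stdSimplex ℝ ι) (hlim : Tendsto bs atTop (𝓝 b))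
    (hKT : ∀ n, SatisfiesKuhnTucker (Q n) (bs n)) : SatisfiesKuhnTucker P b := fun c hc =>
  lintegral_le_of_ae_tendsto (l := 𝓝[>] 0)
    (fun ε => by unfold smoothedRatio; fun_prop)
    (hposP.mono fun _ hu => (ENNReal.continuous_ofReal.tendsto _).comp
      ((tendsto_smoothedRatio hc hb hu).mono_left nhdsWithin_le_nhds))
    (eventually_nhdsWithin_of_forall fun _ hε =>
      lintegral_smoothedRatio_le_one hQ hposQ hbs hlim hKT hc hε)

end WeakLimit

end Portfolio

open Portfolio

/-- Algoet–Cover continuity of log-optimal portfolio returns under weak convergence: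
if `Q_n → Q_∞` weakly, each `Q_n` lives on the positive orthant with
`E_{Q_n}|log U^{(j)}| < ∞`, and `b_n` is log-optimal for `Q_n`, then for
`Q_∞`-almost every `u`, `⟨b_n, u⟩ → ⟨b*, u⟩`, the value being the same for every
log-optimal portfolio `b*` of `Q_∞`. -/
theorem stmt13 (d : ℕ)
    (Q : ℕ → ProbabilityMeasure (Fin d → ℝ)) (Qinf : ProbabilityMeasure (Fin d → ℝ))
    (hsupp : ∀ n, (Q n : Measure (Fin d → ℝ)) {u | ∀ j, 0 < u j} = 1)
    (hsuppinf : (Qinf : Measure (Fin d → ℝ)) {u | ∀ j, 0 < u j} = 1)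
    (hint : ∀ n j, Integrable (fun u : Fin d → ℝ => |Real.log (u j)|) (Q n))
    (hintinf : ∀ j, Integrable (fun u : Fin d → ℝ => |Real.log (u j)|) Qinf)
    (hweak : Tendsto Q atTop (nhds Qinf))
    (b : ℕ → (Fin d → ℝ)) (hbsimplex : ∀ n, b n ∈ stdSimplex ℝ (Fin d))
    (hbopt : ∀ n, ∀ c ∈ stdSimplex ℝ (Fin d),
      ∫ u, Real.log (∑ j, c j * u j) ∂(Q n : Measure (Fin d → ℝ))
        ≤ ∫ u, Real.log (∑ j, b n j * u j) ∂(Q n : Measure (Fin d → ℝ))) :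
    ∀ bstar ∈ stdSimplex ℝ (Fin d),
      (∀ c ∈ stdSimplex ℝ (Fin d),
        ∫ u, Real.log (∑ j, c j * u j) ∂(Qinf : Measure (Fin d → ℝ))
          ≤ ∫ u, Real.log (∑ j, bstar j * u j) ∂(Qinf : Measure (Fin d → ℝ))) →
      ∀ᵐ u ∂(Qinf : Measure (Fin d → ℝ)),
        Tendsto (fun n => ∑ j, b n j * u j) atTop (nhds (∑ j, bstar j * u j)) := by
  intro bstar hbstar hstaropt
  have hposQ := fun n => ae_forall_pos_of_measure_eq_one (hsupp n)
  have hposP := ae_forall_pos_of_measure_eq_one hsuppinf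
  have hsame := ae_forall_mem_eq_of_continuous
    (s := {b' | IsLogOptimal (Qinf : Measure (Fin d → ℝ)) b'}) (f := fun b' u => b' ⬝ᵥ u)
    (g := fun u => bstar ⬝ᵥ u) (fun _ => by fun_prop)
    fun b' (hb' : IsLogOptimal _ b') => hb'.ae_dotProduct_eq hposP hintinf ⟨hbstar, hstaropt⟩
  filter_upwards [hsame] with u hu
  refine tendsto_of_subseq_tendsto fun ns hns => ?_
  obtain ⟨b', hb', φ, hφ, hlim⟩ :=
    (isCompact_stdSimplex ℝ (Fin d)).tendsto_subseq fun k => hbsimplex (ns k)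
  have hKT : SatisfiesKuhnTucker Qinf b' :=
    satisfiesKuhnTucker_of_tendsto (hweak.comp (hns.comp hφ.tendsto_atTop)) (fun _ => hposQ _)
      hposP (fun _ => hbsimplex _) hb' hlim
      fun _ => IsLogOptimal.satisfiesKuhnTucker (hposQ _) (hint _) ⟨hbsimplex _, hbopt _⟩
  refine ⟨φ, show Tendsto (fun k => b (ns (φ k)) ⬝ᵥ u) atTop (𝓝 (bstar ⬝ᵥ u)) from ?_⟩
  rw [← hu b' (hKT.isLogOptimal hposP hintinf hb')]
  exact ((continuous_id.dotProduct continuous_const).tendsto b').comp hlim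
end

section
/- For a distribution Q on R^d_+ with E_Q[|log U^{(j)}|] < infinity for all j, if b_1* and b_2* are both maximizers of b -> E_Q[log <b, U>] over the simplex Delta_d, then <b_1*, U> = <b_2*, U> Q-almost surely. -/
/-!
Strict concavity of `log`. Two optimal portfolios `b₁`, `b₂` have the same value `V`, and their
midpoint `m` is admissible, so
`E[log ⟨m, U⟩] ≤ V = (E[log ⟨b₁, U⟩] + E[log ⟨b₂, U⟩]) / 2`.
Pointwise, concavity gives `log ⟨m, U⟩ ≥ (log ⟨b₁, U⟩ + log ⟨b₂, U⟩) / 2`, so the two sides agree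
almost surely, and strictness forces `⟨b₁, U⟩ = ⟨b₂, U⟩` there. All these expectations are finite
because `|log ⟨b, U⟩| ≤ ∑ j, |log U j|`.
-/

open MeasureTheory Real

namespace Real

variable {x y : ℝ}

lemma add_log_div_two_lt_log_midpoint (hx : 0 < x) (hy : 0 < y) (hxy : x ≠ y) :
    (log x + log y) / 2 < log ((x + y) / 2) := by
  have h := strictConcaveOn_log_Ioi.2 hx hy hxy (by norm_num : (0 : ℝ) < 1 / 2)
    (by norm_num : (0 : ℝ) < 1 / 2) (by norm_num)
  simp only [smul_eq_mul] at h
  rw [show (x + y) / 2 = 1 / 2 * x + 1 / 2 * y by ring]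
  linarith

lemma add_log_div_two_le_log_midpoint (hx : 0 < x) (hy : 0 < y) :
    (log x + log y) / 2 ≤ log ((x + y) / 2) := by
  rcases eq_or_ne x y with rfl | hxy
  · rw [add_self_div_two, add_self_div_two]
  · exact (add_log_div_two_lt_log_midpoint hx hy hxy).le

end Real

theorem ae_eq_of_integral_log_midpoint_le {Ω : Type*} [MeasurableSpace Ω] {μ : Measure Ω}
    {X Y : Ω → ℝ} (hX : ∀ᵐ ω ∂μ, 0 < X ω) (hY : ∀ᵐ ω ∂μ, 0 < Y ω)
    (hlX : Integrable (fun ω => log (X ω)) μ) (hlY : Integrable (fun ω => log (Y ω)) μ)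
    (hlM : Integrable (fun ω => log ((X ω + Y ω) / 2)) μ)
    (hle : ∫ ω, log ((X ω + Y ω) / 2) ∂μ ≤ (∫ ω, log (X ω) ∂μ + ∫ ω, log (Y ω) ∂μ) / 2) :
    X =ᵐ[μ] Y := by
  have hmean : Integrable (fun ω => (log (X ω) + log (Y ω)) / 2) μ := (hlX.add hlY).div_const 2
  have hpt : (fun ω => (log (X ω) + log (Y ω)) / 2) ≤ᵐ[μ] fun ω => log ((X ω + Y ω) / 2) := by
    filter_upwards [hX, hY] with ω hx hy using add_log_div_two_le_log_midpoint hx hy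
  have heq : (fun ω => (log (X ω) + log (Y ω)) / 2) =ᵐ[μ] fun ω => log ((X ω + Y ω) / 2) := by
    refine (integral_eq_iff_of_ae_le hmean hlM hpt).1
      (le_antisymm (integral_mono_ae hmean hlM hpt) ?_)
    rwa [integral_div, integral_add hlX hlY]
  filter_upwards [hX, hY, heq] with ω hx hy h
  by_contra hne
  exact (add_log_div_two_lt_log_midpoint hx hy hne).ne h

section stdSimplex

variable {ι : Type*} [Fintype ι] {b u : ι → ℝ}

lemma sum_mul_mem_of_mem_stdSimplex {s : Set ℝ} (hs : Convex ℝ s) (hb : b ∈ stdSimplex ℝ ι)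
    (hu : ∀ j, u j ∈ s) : ∑ j, b j * u j ∈ s :=
  hs.sum_mem (fun j _ => hb.1 j) hb.2 (fun j _ => hu j)

lemma sum_mul_pos_of_mem_stdSimplex (hb : b ∈ stdSimplex ℝ ι) (hu : ∀ j, 0 < u j) :
    0 < ∑ j, b j * u j :=
  sum_mul_mem_of_mem_stdSimplex (convex_Ioi 0) hb hu

lemma abs_log_sum_mul_le_of_mem_stdSimplex_s14 (hb : b ∈ stdSimplex ℝ ι) (hu : ∀ j, 0 < u j) :
    |log (∑ j, b j * u j)| ≤ ∑ j, |log (u j)| := by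
  set S := ∑ j, |log (u j)|
  have habs_le_iff : ∀ x, 0 < x → (|log x| ≤ S ↔ x ∈ Set.Icc (exp (-S)) (exp S)) := fun x hx => by
    rw [abs_le, le_log_iff_exp_le hx, log_le_iff_le_exp hx, Set.mem_Icc]
  refine (habs_le_iff _ (sum_mul_pos_of_mem_stdSimplex hb hu)).2 <|
    sum_mul_mem_of_mem_stdSimplex (convex_Icc _ _) hb fun j => (habs_le_iff _ (hu j)).1 ?_
  exact Finset.single_le_sum (f := fun j => |log (u j)|) (fun j _ => abs_nonneg _)
    (Finset.mem_univ j)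

lemma integrable_log_sum_mul_of_mem_stdSimplex {Q : Measure (ι → ℝ)}
    (hpos : ∀ᵐ u ∂Q, ∀ j, 0 < u j) (hint : ∀ j, Integrable (fun u : ι → ℝ => |log (u j)|) Q)
    (hb : b ∈ stdSimplex ℝ ι) : Integrable (fun u : ι → ℝ => log (∑ j, b j * u j)) Q := by
  refine Integrable.mono' (g := fun u => ∑ j, |log (u j)|)
    (integrable_finsetSum _ fun j _ => hint j)
    (measurable_log.comp (by fun_prop)).aestronglyMeasurable ?_
  filter_upwards [hpos] with u hu
  rw [norm_eq_abs]
  exact abs_log_sum_mul_le_of_mem_stdSimplex_s14 hb hu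

end stdSimplex

/-- Uniqueness of the log-optimal return: if `b₁*` and `b₂*` both maximize
`b ↦ E_Q[log ⟨b, U⟩]` over the simplex `Δ_d`, then `⟨b₁*, U⟩ = ⟨b₂*, U⟩` `Q`-a.s. -/
theorem stmt14 (d : ℕ) (Q : Measure (Fin d → ℝ)) [IsProbabilityMeasure Q]
    (hsupp : Q {u | ∀ j, 0 < u j} = 1)
    (hint : ∀ j, Integrable (fun u : Fin d → ℝ => |Real.log (u j)|) Q)
    (b₁ b₂ : Fin d → ℝ)
    (hb₁ : b₁ ∈ stdSimplex ℝ (Fin d)) (hb₂ : b₂ ∈ stdSimplex ℝ (Fin d))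
    (hopt₁ : ∀ c ∈ stdSimplex ℝ (Fin d),
      ∫ u, Real.log (∑ j, c j * u j) ∂Q ≤ ∫ u, Real.log (∑ j, b₁ j * u j) ∂Q)
    (hopt₂ : ∀ c ∈ stdSimplex ℝ (Fin d),
      ∫ u, Real.log (∑ j, c j * u j) ∂Q ≤ ∫ u, Real.log (∑ j, b₂ j * u j) ∂Q) :
    ∀ᵐ u ∂Q, ∑ j, b₁ j * u j = ∑ j, b₂ j * u j := by
  have hpos : ∀ᵐ u ∂Q, ∀ j, 0 < u j := by
    rw [ae_iff_measure_eq (by measurability), hsupp, measure_univ]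
  set m : Fin d → ℝ := (1 / 2 : ℝ) • b₁ + (1 / 2 : ℝ) • b₂
  have hm : m ∈ stdSimplex ℝ (Fin d) :=
    convex_stdSimplex ℝ (Fin d) hb₁ hb₂ (by norm_num) (by norm_num) (by norm_num)
  have hret : ∀ u : Fin d → ℝ,
      ∑ j, m j * u j = (∑ j, b₁ j * u j + ∑ j, b₂ j * u j) / 2 := fun u => by
    simp only [m, Pi.add_apply, Pi.smul_apply, smul_eq_mul, add_mul, Finset.sum_add_distrib,
      mul_assoc, ← Finset.mul_sum]
    ring
  have hI := fun b (hb : b ∈ stdSimplex ℝ (Fin d)) =>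
    integrable_log_sum_mul_of_mem_stdSimplex hpos hint hb
  refine ae_eq_of_integral_log_midpoint_le
    (hpos.mono fun u hu => sum_mul_pos_of_mem_stdSimplex hb₁ hu)
    (hpos.mono fun u hu => sum_mul_pos_of_mem_stdSimplex hb₂ hu) (hI b₁ hb₁) (hI b₂ hb₂)
    (by simpa only [hret] using hI m hm) ?_
  simp only [← hret]
  linarith [hopt₁ m hm, hopt₁ b₂ hb₂, hopt₂ b₁ hb₁]
end
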